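/- The group generated by 𝖷 = -iX, 𝖹 = -iZ, 𝖥 = e^{-iπ/4}HS†, and Φ = (1/2)[[φ + iφ⁻¹, 1],[-1, φ - iφ⁻¹]] is a subgroup of SU(2) of order 120 isomorphic to SL(2,5). -/

import Mathlib

open Matrix Complex

noncomputable section

def PauliX : Matrix (Fin 2) (Fin 2) ℂ := !![0, 1; 1, 0]
def PauliZ : Matrix (Fin 2) (Fin 2) ℂ := !![1, 0; 0, -1]
def Hadamard : Matrix (Fin 2) (Fin 2) ℂ := (1 / (Real.sqrt 2 : ℂ)) • !![1, 1; 1, -1]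
def Sgate : Matrix (Fin 2) (Fin 2) ℂ := !![1, 0; 0, I]

/-- 𝖷 = -iX -/
def Xsf : Matrix (Fin 2) (Fin 2) ℂ := (-I) • PauliX
/-- 𝖹 = -iZ -/
def Zsf : Matrix (Fin 2) (Fin 2) ℂ := (-I) • PauliZ
/-- 𝖥 = e^{-iπ/4} · H S† -/
def Fsf : Matrix (Fin 2) (Fin 2) ℂ :=
  Complex.exp (-(Real.pi / 4) * I) • (Hadamard * Sgateᴴ)

/-- The golden ratio φ = (1+√5)/2, as a complex number. -/
def goldenφ : ℂ := (1 + Real.sqrt 5) / 2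

/-- The gate Φ = (1/2)[[φ + iφ⁻¹, 1], [-1, φ - iφ⁻¹]]. -/
def Phi : Matrix (Fin 2) (Fin 2) ℂ :=
  (1 / 2 : ℂ) • !![goldenφ + I * goldenφ⁻¹, 1; -1, goldenφ - I * goldenφ⁻¹]

/-- The generating set {𝖷, 𝖹, 𝖥, Φ}, as a subset of the 2×2 unitary group. -/
def icosaGens : Set (Matrix.unitaryGroup (Fin 2) ℂ) :=
  {g | (g : Matrix (Fin 2) (Fin 2) ℂ) = Xsf ∨
       (g : Matrix (Fin 2) (Fin 2) ℂ) = Zsf ∨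
       (g : Matrix (Fin 2) (Fin 2) ℂ) = Fsf ∨
       (g : Matrix (Fin 2) (Fin 2) ℂ) = Phi}


structure KI where
  a : ℤ
  b : ℤ
  c : ℤ
  d : ℤ
deriving DecidableEq

structure MI where
  p : KI
  q : KI
  r : KI
  s : KI
deriving DecidableEq

structure M5 where
  p : ZMod 5
  q : ZMod 5
  r : ZMod 5
  s : ZMod 5
deriving DecidableEq

abbrev PR := MI × M5

def KB (x y : KI) : KI :=
  ⟨x.a*y.a + 5*x.b*y.b - x.c*y.c - 5*x.d*y.d,
   x.a*y.b + x.b*y.a - x.c*y.d - x.d*y.c,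
   x.a*y.c + x.c*y.a + 5*(x.b*y.d + x.d*y.b),
   x.a*y.d + x.d*y.a + x.b*y.c + x.c*y.b⟩

def kadd (x y : KI) : KI := ⟨x.a+y.a, x.b+y.b, x.c+y.c, x.d+y.d⟩
def kneg (x : KI) : KI := ⟨-x.a, -x.b, -x.c, -x.d⟩
def k4 (x : KI) : KI := ⟨4*x.a, 4*x.b, 4*x.c, 4*x.d⟩
def kconj (x : KI) : KI := ⟨x.a, x.b, -x.c, -x.d⟩

def matB (m n : MI) : MI :=
  ⟨kadd (KB m.p n.p) (KB m.q n.r), kadd (KB m.p n.q) (KB m.q n.s),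
   kadd (KB m.r n.p) (KB m.s n.r), kadd (KB m.r n.q) (KB m.s n.s)⟩

def k4M (m : MI) : MI := ⟨k4 m.p, k4 m.q, k4 m.r, k4 m.s⟩
def detB (m : MI) : KI := kadd (KB m.p m.s) (kneg (KB m.q m.r))
def adjB (m : MI) : MI := ⟨m.s, kneg m.q, kneg m.r, m.p⟩
def conjT (m : MI) : MI := ⟨kconj m.p, kconj m.r, kconj m.q, kconj m.s⟩
def oneI : MI := ⟨⟨4,0,0,0⟩, ⟨0,0,0,0⟩, ⟨0,0,0,0⟩, ⟨4,0,0,0⟩⟩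

def m5mul (m n : M5) : M5 :=
  ⟨m.p*n.p + m.q*n.r, m.p*n.q + m.q*n.s, m.r*n.p + m.s*n.r, m.r*n.q + m.s*n.s⟩
def det5 (m : M5) : ZMod 5 := m.p*m.s - m.q*m.r
def adj5 (m : M5) : M5 := ⟨m.s, -m.q, -m.r, m.p⟩
def one5 : M5 := ⟨1,0,0,1⟩

def pmul (x y : PR) : PR := (matB x.1 y.1, m5mul x.2 y.2)
def pairRel (s p q : PR) : Prop := matB s.1 p.1 = k4M q.1 ∧ m5mul s.2 p.2 = q.2
instance : ∀ s p q : PR, Decidable (pairRel s p q) := fun _ _ _ => instDecidableAnd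
def onePair : PR := (oneI, one5)
def adjP (x : PR) : PR := (adjB x.1, adj5 x.2)
def e0 : PR := (⟨⟨4,0,0,0⟩,⟨0,0,0,0⟩,⟨0,0,0,0⟩,⟨4,0,0,0⟩⟩, ⟨1,0,0,1⟩)
def e1 : PR := (⟨⟨0,0,0,0⟩,⟨0,0,-4,0⟩,⟨0,0,-4,0⟩,⟨0,0,0,0⟩⟩, ⟨0,1,4,0⟩)
def e2 : PR := (⟨⟨0,0,-4,0⟩,⟨0,0,0,0⟩,⟨0,0,0,0⟩,⟨0,0,4,0⟩⟩, ⟨0,2,2,0⟩)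
def e3 : PR := (⟨⟨2,0,-2,0⟩,⟨-2,0,-2,0⟩,⟨2,0,-2,0⟩,⟨2,0,2,0⟩⟩, ⟨2,4,3,4⟩)
def e4 : PR := (⟨⟨1,1,-1,1⟩,⟨2,0,0,0⟩,⟨-2,0,0,0⟩,⟨1,1,1,-1⟩⟩, ⟨0,3,3,3⟩)
def e5 : PR := (⟨⟨-4,0,0,0⟩,⟨0,0,0,0⟩,⟨0,0,0,0⟩,⟨-4,0,0,0⟩⟩, ⟨4,0,0,4⟩)
def e6 : PR := (⟨⟨0,0,0,0⟩,⟨-4,0,0,0⟩,⟨4,0,0,0⟩,⟨0,0,0,0⟩⟩, ⟨3,0,0,2⟩)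
def e7 : PR := (⟨⟨-2,0,2,0⟩,⟨-2,0,-2,0⟩,⟨2,0,-2,0⟩,⟨-2,0,-2,0⟩⟩, ⟨1,2,1,3⟩)
def e8 : PR := (⟨⟨0,0,-2,0⟩,⟨-1,1,-1,-1⟩,⟨1,-1,-1,-1⟩,⟨0,0,2,0⟩⟩, ⟨2,0,2,3⟩)
def e9 : PR := (⟨⟨0,0,0,0⟩,⟨4,0,0,0⟩,⟨-4,0,0,0⟩,⟨0,0,0,0⟩⟩, ⟨2,0,0,3⟩)
def e10 : PR := (⟨⟨-2,0,-2,0⟩,⟨2,0,-2,0⟩,⟨-2,0,-2,0⟩,⟨-2,0,2,0⟩⟩, ⟨3,4,3,1⟩)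
def e11 : PR := (⟨⟨-1,1,-1,-1⟩,⟨0,0,2,0⟩,⟨0,0,2,0⟩,⟨-1,1,1,1⟩⟩, ⟨1,0,1,1⟩)
def e12 : PR := (⟨⟨-2,0,-2,0⟩,⟨-2,0,2,0⟩,⟨2,0,2,0⟩,⟨-2,0,2,0⟩⟩, ⟨1,3,4,3⟩)
def e13 : PR := (⟨⟨-2,0,-2,0⟩,⟨-2,0,-2,0⟩,⟨2,0,-2,0⟩,⟨-2,0,2,0⟩⟩, ⟨1,4,3,3⟩)
def e14 : PR := (⟨⟨1,1,-2,0⟩,⟨0,0,1,-1⟩,⟨0,0,1,-1⟩,⟨1,1,2,0⟩⟩, ⟨4,2,0,4⟩)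
def e15 : PR := (⟨⟨0,0,2,0⟩,⟨1,-1,-1,-1⟩,⟨-1,1,-1,-1⟩,⟨0,0,-2,0⟩⟩, ⟨3,3,0,2⟩)
def e16 : PR := (⟨⟨-1,1,-1,-1⟩,⟨0,0,-2,0⟩,⟨0,0,-2,0⟩,⟨-1,1,1,1⟩⟩, ⟨1,1,0,1⟩)
def e17 : PR := (⟨⟨1,1,0,0⟩,⟨1,-1,-2,0⟩,⟨-1,1,-2,0⟩,⟨1,1,0,0⟩⟩, ⟨2,3,2,1⟩)
def e18 : PR := (⟨⟨-1,1,2,0⟩,⟨1,1,0,0⟩,⟨-1,-1,0,0⟩,⟨-1,1,-2,0⟩⟩, ⟨4,4,4,3⟩)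
def e19 : PR := (⟨⟨0,0,0,0⟩,⟨0,0,4,0⟩,⟨0,0,4,0⟩,⟨0,0,0,0⟩⟩, ⟨0,4,1,0⟩)
def e20 : PR := (⟨⟨0,0,4,0⟩,⟨0,0,0,0⟩,⟨0,0,0,0⟩,⟨0,0,-4,0⟩⟩, ⟨0,3,3,0⟩)
def e21 : PR := (⟨⟨-2,0,2,0⟩,⟨2,0,2,0⟩,⟨-2,0,2,0⟩,⟨-2,0,-2,0⟩⟩, ⟨3,1,2,1⟩)
def e22 : PR := (⟨⟨-1,-1,1,-1⟩,⟨-2,0,0,0⟩,⟨2,0,0,0⟩,⟨-1,-1,-1,1⟩⟩, ⟨0,2,2,2⟩)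
def e23 : PR := (⟨⟨2,0,0,0⟩,⟨-1,-1,1,-1⟩,⟨1,1,1,-1⟩,⟨2,0,0,0⟩⟩, ⟨0,1,4,1⟩)
def e24 : PR := (⟨⟨2,0,2,0⟩,⟨-2,0,2,0⟩,⟨2,0,2,0⟩,⟨2,0,-2,0⟩⟩, ⟨2,1,2,4⟩)
def e25 : PR := (⟨⟨-2,0,2,0⟩,⟨-2,0,2,0⟩,⟨2,0,2,0⟩,⟨-2,0,-2,0⟩⟩, ⟨1,1,2,3⟩)
def e26 : PR := (⟨⟨1,-1,0,0⟩,⟨-2,0,-1,-1⟩,⟨2,0,-1,-1⟩,⟨1,-1,0,0⟩⟩, ⟨3,4,1,0⟩)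
def e27 : PR := (⟨⟨-1,-1,-1,1⟩,⟨2,0,0,0⟩,⟨-2,0,0,0⟩,⟨-1,-1,1,-1⟩⟩, ⟨2,3,3,0⟩)
def e28 : PR := (⟨⟨-2,0,0,0⟩,⟨-1,-1,1,-1⟩,⟨1,1,1,-1⟩,⟨-2,0,0,0⟩⟩, ⟨4,1,4,0⟩)
def e29 : PR := (⟨⟨-2,0,-1,1⟩,⟨0,0,-1,-1⟩,⟨0,0,-1,-1⟩,⟨-2,0,1,-1⟩⟩, ⟨2,2,4,2⟩)
def e30 : PR := (⟨⟨0,0,-1,-1⟩,⟨2,0,1,-1⟩,⟨-2,0,1,-1⟩,⟨0,0,1,1⟩⟩, ⟨1,4,2,4⟩)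
def e31 : PR := (⟨⟨2,0,2,0⟩,⟨2,0,-2,0⟩,⟨-2,0,-2,0⟩,⟨2,0,-2,0⟩⟩, ⟨4,2,1,2⟩)
def e32 : PR := (⟨⟨-2,0,0,0⟩,⟨1,1,-1,1⟩,⟨-1,-1,-1,1⟩,⟨-2,0,0,0⟩⟩, ⟨0,4,1,4⟩)
def e33 : PR := (⟨⟨-2,0,2,0⟩,⟨2,0,-2,0⟩,⟨-2,0,-2,0⟩,⟨-2,0,-2,0⟩⟩, ⟨3,2,1,1⟩)
def e34 : PR := (⟨⟨-2,0,-1,-1⟩,⟨-1,1,0,0⟩,⟨1,-1,0,0⟩,⟨-2,0,1,1⟩⟩, ⟨4,3,3,0⟩)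
def e35 : PR := (⟨⟨2,0,0,0⟩,⟨1,1,1,-1⟩,⟨-1,-1,1,-1⟩,⟨2,0,0,0⟩⟩, ⟨1,1,4,0⟩)
def e36 : PR := (⟨⟨-1,-1,1,-1⟩,⟨2,0,0,0⟩,⟨-2,0,0,0⟩,⟨-1,-1,-1,1⟩⟩, ⟨2,2,2,0⟩)
def e37 : PR := (⟨⟨2,0,1,-1⟩,⟨0,0,1,1⟩,⟨0,0,1,1⟩,⟨2,0,-1,1⟩⟩, ⟨3,3,1,3⟩)
def e38 : PR := (⟨⟨2,0,-2,0⟩,⟨2,0,2,0⟩,⟨-2,0,2,0⟩,⟨2,0,2,0⟩⟩, ⟨4,3,4,2⟩)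
def e39 : PR := (⟨⟨-2,0,-2,0⟩,⟨2,0,2,0⟩,⟨-2,0,2,0⟩,⟨-2,0,2,0⟩⟩, ⟨3,3,4,1⟩)
def e40 : PR := (⟨⟨0,0,1,-1⟩,⟨-1,-1,2,0⟩,⟨1,1,2,0⟩,⟨0,0,-1,1⟩⟩, ⟨2,4,0,3⟩)
def e41 : PR := (⟨⟨0,0,-1,-1⟩,⟨-2,0,1,-1⟩,⟨2,0,1,-1⟩,⟨0,0,1,1⟩⟩, ⟨4,4,2,1⟩)
def e42 : PR := (⟨⟨1,-1,0,0⟩,⟨2,0,-1,-1⟩,⟨-2,0,-1,-1⟩,⟨1,-1,0,0⟩⟩, ⟨0,4,1,3⟩)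
def e43 : PR := (⟨⟨-2,0,-1,-1⟩,⟨1,-1,0,0⟩,⟨-1,1,0,0⟩,⟨-2,0,1,1⟩⟩, ⟨0,3,3,4⟩)
def e44 : PR := (⟨⟨0,0,-2,0⟩,⟨1,-1,-1,-1⟩,⟨-1,1,-1,-1⟩,⟨0,0,2,0⟩⟩, ⟨3,0,2,2⟩)
def e45 : PR := (⟨⟨1,1,1,-1⟩,⟨2,0,0,0⟩,⟨-2,0,0,0⟩,⟨1,1,-1,1⟩⟩, ⟨0,2,2,3⟩)
def e46 : PR := (⟨⟨2,0,0,0⟩,⟨-1,-1,-1,1⟩,⟨1,1,-1,1⟩,⟨2,0,0,0⟩⟩, ⟨0,4,1,1⟩)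
def e47 : PR := (⟨⟨1,-1,2,0⟩,⟨-1,-1,0,0⟩,⟨1,1,0,0⟩,⟨1,-1,-2,0⟩⟩, ⟨1,4,4,2⟩)
def e48 : PR := (⟨⟨-2,0,0,0⟩,⟨1,1,1,-1⟩,⟨-1,-1,1,-1⟩,⟨-2,0,0,0⟩⟩, ⟨0,1,4,4⟩)
def e49 : PR := (⟨⟨-2,0,1,-1⟩,⟨0,0,-1,-1⟩,⟨0,0,-1,-1⟩,⟨-2,0,-1,1⟩⟩, ⟨2,1,3,2⟩)
def e50 : PR := (⟨⟨2,0,-1,-1⟩,⟨-1,1,0,0⟩,⟨1,-1,0,0⟩,⟨2,0,1,1⟩⟩, ⟨0,3,3,1⟩)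
def e51 : PR := (⟨⟨0,0,-1,-1⟩,⟨-2,0,-1,1⟩,⟨2,0,-1,1⟩,⟨0,0,1,1⟩⟩, ⟨4,2,4,1⟩)
def e52 : PR := (⟨⟨0,0,1,-1⟩,⟨-1,-1,-2,0⟩,⟨1,1,-2,0⟩,⟨0,0,-1,1⟩⟩, ⟨2,0,4,3⟩)
def e53 : PR := (⟨⟨1,1,0,0⟩,⟨-1,1,-2,0⟩,⟨1,-1,-2,0⟩,⟨1,1,0,0⟩⟩, ⟨1,3,2,2⟩)
def e54 : PR := (⟨⟨0,0,1,1⟩,⟨-2,0,1,-1⟩,⟨2,0,1,-1⟩,⟨0,0,-1,-1⟩⟩, ⟨4,3,1,1⟩)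
def e55 : PR := (⟨⟨2,0,1,-1⟩,⟨0,0,-1,-1⟩,⟨0,0,-1,-1⟩,⟨2,0,-1,1⟩⟩, ⟨3,1,3,3⟩)
def e56 : PR := (⟨⟨1,1,2,0⟩,⟨0,0,1,-1⟩,⟨0,0,1,-1⟩,⟨1,1,-2,0⟩⟩, ⟨4,0,3,4⟩)
def e57 : PR := (⟨⟨1,-1,2,0⟩,⟨1,1,0,0⟩,⟨-1,-1,0,0⟩,⟨1,-1,-2,0⟩⟩, ⟨2,4,4,1⟩)
def e58 : PR := (⟨⟨0,0,2,0⟩,⟨1,-1,1,1⟩,⟨-1,1,1,1⟩,⟨0,0,-2,0⟩⟩, ⟨3,0,3,2⟩)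
def e59 : PR := (⟨⟨1,-1,1,1⟩,⟨0,0,-2,0⟩,⟨0,0,-2,0⟩,⟨1,-1,-1,-1⟩⟩, ⟨4,0,4,4⟩)
def e60 : PR := (⟨⟨2,0,2,0⟩,⟨2,0,2,0⟩,⟨-2,0,2,0⟩,⟨2,0,-2,0⟩⟩, ⟨4,1,2,2⟩)
def e61 : PR := (⟨⟨-1,-1,2,0⟩,⟨0,0,-1,1⟩,⟨0,0,-1,1⟩,⟨-1,-1,-2,0⟩⟩, ⟨1,3,0,1⟩)
def e62 : PR := (⟨⟨0,0,-2,0⟩,⟨-1,1,1,1⟩,⟨1,-1,1,1⟩,⟨0,0,2,0⟩⟩, ⟨2,2,0,3⟩)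
def e63 : PR := (⟨⟨1,-1,1,1⟩,⟨0,0,2,0⟩,⟨0,0,2,0⟩,⟨1,-1,-1,-1⟩⟩, ⟨4,4,0,4⟩)
def e64 : PR := (⟨⟨-1,-1,0,0⟩,⟨-1,1,2,0⟩,⟨1,-1,2,0⟩,⟨-1,-1,0,0⟩⟩, ⟨3,2,3,4⟩)
def e65 : PR := (⟨⟨1,-1,-2,0⟩,⟨-1,-1,0,0⟩,⟨1,1,0,0⟩,⟨1,-1,2,0⟩⟩, ⟨1,1,1,2⟩)
def e66 : PR := (⟨⟨1,-1,-1,-1⟩,⟨0,0,-2,0⟩,⟨0,0,-2,0⟩,⟨1,-1,1,1⟩⟩, ⟨4,1,0,4⟩)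
def e67 : PR := (⟨⟨0,0,-2,0⟩,⟨1,-1,1,1⟩,⟨-1,1,1,1⟩,⟨0,0,2,0⟩⟩, ⟨3,2,0,2⟩)
def e68 : PR := (⟨⟨2,0,-2,0⟩,⟨-2,0,2,0⟩,⟨2,0,2,0⟩,⟨2,0,2,0⟩⟩, ⟨2,3,4,4⟩)
def e69 : PR := (⟨⟨2,0,1,1⟩,⟨1,-1,0,0⟩,⟨-1,1,0,0⟩,⟨2,0,-1,-1⟩⟩, ⟨1,2,2,0⟩)
def e70 : PR := (⟨⟨-1,-1,-2,0⟩,⟨0,0,-1,1⟩,⟨0,0,-1,1⟩,⟨-1,-1,2,0⟩⟩, ⟨1,0,2,1⟩)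
def e71 : PR := (⟨⟨0,0,-1,1⟩,⟨-1,-1,2,0⟩,⟨1,1,2,0⟩,⟨0,0,1,-1⟩⟩, ⟨2,0,1,3⟩)
def e72 : PR := (⟨⟨-1,-1,-1,1⟩,⟨-2,0,0,0⟩,⟨2,0,0,0⟩,⟨-1,-1,1,-1⟩⟩, ⟨0,3,3,2⟩)
def e73 : PR := (⟨⟨-1,1,1,1⟩,⟨0,0,-2,0⟩,⟨0,0,-2,0⟩,⟨-1,1,-1,-1⟩⟩, ⟨1,0,4,1⟩)
def e74 : PR := (⟨⟨0,0,1,1⟩,⟨2,0,-1,1⟩,⟨-2,0,-1,1⟩,⟨0,0,-1,-1⟩⟩, ⟨1,1,3,4⟩)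
def e75 : PR := (⟨⟨1,-1,-1,-1⟩,⟨0,0,2,0⟩,⟨0,0,2,0⟩,⟨1,-1,1,1⟩⟩, ⟨4,0,1,4⟩)
def e76 : PR := (⟨⟨-1,-1,0,0⟩,⟨1,-1,2,0⟩,⟨-1,1,2,0⟩,⟨-1,-1,0,0⟩⟩, ⟨4,2,3,3⟩)
def e77 : PR := (⟨⟨-1,1,2,0⟩,⟨-1,-1,0,0⟩,⟨1,1,0,0⟩,⟨-1,1,-2,0⟩⟩, ⟨3,4,4,4⟩)
def e78 : PR := (⟨⟨-2,0,1,1⟩,⟨1,-1,0,0⟩,⟨-1,1,0,0⟩,⟨-2,0,-1,-1⟩⟩, ⟨0,2,2,4⟩)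
def e79 : PR := (⟨⟨-1,-1,0,0⟩,⟨1,-1,-2,0⟩,⟨-1,1,-2,0⟩,⟨-1,-1,0,0⟩⟩, ⟨4,3,2,3⟩)
def e80 : PR := (⟨⟨0,0,-1,-1⟩,⟨2,0,-1,1⟩,⟨-2,0,-1,1⟩,⟨0,0,1,1⟩⟩, ⟨1,2,4,4⟩)
def e81 : PR := (⟨⟨2,0,2,0⟩,⟨-2,0,-2,0⟩,⟨2,0,-2,0⟩,⟨2,0,-2,0⟩⟩, ⟨2,2,1,4⟩)
def e82 : PR := (⟨⟨0,0,-1,1⟩,⟨1,1,-2,0⟩,⟨-1,-1,-2,0⟩,⟨0,0,1,-1⟩⟩, ⟨3,1,0,2⟩)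
def e83 : PR := (⟨⟨-1,1,1,1⟩,⟨0,0,2,0⟩,⟨0,0,2,0⟩,⟨-1,1,-1,-1⟩⟩, ⟨1,4,0,1⟩)
def e84 : PR := (⟨⟨0,0,2,0⟩,⟨-1,1,-1,-1⟩,⟨1,-1,-1,-1⟩,⟨0,0,-2,0⟩⟩, ⟨2,3,0,3⟩)
def e85 : PR := (⟨⟨-1,-1,0,0⟩,⟨-1,1,-2,0⟩,⟨1,-1,-2,0⟩,⟨-1,-1,0,0⟩⟩, ⟨3,3,2,4⟩)
def e86 : PR := (⟨⟨0,0,-1,1⟩,⟨1,1,2,0⟩,⟨-1,-1,2,0⟩,⟨0,0,1,-1⟩⟩, ⟨3,0,1,2⟩)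
def e87 : PR := (⟨⟨-1,-1,2,0⟩,⟨0,0,1,-1⟩,⟨0,0,1,-1⟩,⟨-1,-1,-2,0⟩⟩, ⟨1,0,3,1⟩)
def e88 : PR := (⟨⟨2,0,-1,1⟩,⟨0,0,-1,-1⟩,⟨0,0,-1,-1⟩,⟨2,0,1,-1⟩⟩, ⟨3,2,4,3⟩)
def e89 : PR := (⟨⟨0,0,2,0⟩,⟨-1,1,1,1⟩,⟨1,-1,1,1⟩,⟨0,0,-2,0⟩⟩, ⟨2,0,3,3⟩)
def e90 : PR := (⟨⟨1,-1,-2,0⟩,⟨1,1,0,0⟩,⟨-1,-1,0,0⟩,⟨1,-1,2,0⟩⟩, ⟨2,1,1,1⟩)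
def e91 : PR := (⟨⟨2,0,-1,1⟩,⟨0,0,1,1⟩,⟨0,0,1,1⟩,⟨2,0,1,-1⟩⟩, ⟨3,4,2,3⟩)
def e92 : PR := (⟨⟨2,0,-2,0⟩,⟨2,0,-2,0⟩,⟨-2,0,-2,0⟩,⟨2,0,2,0⟩⟩, ⟨4,4,3,2⟩)
def e93 : PR := (⟨⟨-1,1,0,0⟩,⟨2,0,1,1⟩,⟨-2,0,1,1⟩,⟨-1,1,0,0⟩⟩, ⟨2,1,4,0⟩)
def e94 : PR := (⟨⟨-2,0,1,-1⟩,⟨0,0,1,1⟩,⟨0,0,1,1⟩,⟨-2,0,-1,1⟩⟩, ⟨2,3,1,2⟩)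
def e95 : PR := (⟨⟨1,-1,0,0⟩,⟨2,0,1,1⟩,⟨-2,0,1,1⟩,⟨1,-1,0,0⟩⟩, ⟨0,1,4,3⟩)
def e96 : PR := (⟨⟨-1,-1,-2,0⟩,⟨0,0,1,-1⟩,⟨0,0,1,-1⟩,⟨-1,-1,2,0⟩⟩, ⟨1,2,0,1⟩)
def e97 : PR := (⟨⟨2,0,-1,-1⟩,⟨1,-1,0,0⟩,⟨-1,1,0,0⟩,⟨2,0,1,1⟩⟩, ⟨1,3,3,0⟩)
def e98 : PR := (⟨⟨0,0,-1,1⟩,⟨-1,-1,-2,0⟩,⟨1,1,-2,0⟩,⟨0,0,1,-1⟩⟩, ⟨2,1,0,3⟩)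
def e99 : PR := (⟨⟨0,0,1,-1⟩,⟨1,1,2,0⟩,⟨-1,-1,2,0⟩,⟨0,0,-1,1⟩⟩, ⟨3,4,0,2⟩)
def e100 : PR := (⟨⟨-2,0,0,0⟩,⟨-1,-1,-1,1⟩,⟨1,1,-1,1⟩,⟨-2,0,0,0⟩⟩, ⟨4,4,1,0⟩)
def e101 : PR := (⟨⟨2,0,0,0⟩,⟨1,1,-1,1⟩,⟨-1,-1,-1,1⟩,⟨2,0,0,0⟩⟩, ⟨1,4,1,0⟩)
def e102 : PR := (⟨⟨1,1,-1,1⟩,⟨-2,0,0,0⟩,⟨2,0,0,0⟩,⟨1,1,1,-1⟩⟩, ⟨3,3,3,0⟩)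
def e103 : PR := (⟨⟨1,-1,0,0⟩,⟨-2,0,1,1⟩,⟨2,0,1,1⟩,⟨1,-1,0,0⟩⟩, ⟨3,1,4,0⟩)
def e104 : PR := (⟨⟨0,0,1,1⟩,⟨2,0,1,-1⟩,⟨-2,0,1,-1⟩,⟨0,0,-1,-1⟩⟩, ⟨1,3,1,4⟩)
def e105 : PR := (⟨⟨-1,1,-2,0⟩,⟨1,1,0,0⟩,⟨-1,-1,0,0⟩,⟨-1,1,2,0⟩⟩, ⟨4,1,1,3⟩)
def e106 : PR := (⟨⟨-1,1,0,0⟩,⟨-2,0,-1,-1⟩,⟨2,0,-1,-1⟩,⟨-1,1,0,0⟩⟩, ⟨0,4,1,2⟩)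
def e107 : PR := (⟨⟨1,1,0,0⟩,⟨1,-1,2,0⟩,⟨-1,1,2,0⟩,⟨1,1,0,0⟩⟩, ⟨2,2,3,1⟩)
def e108 : PR := (⟨⟨0,0,1,1⟩,⟨-2,0,-1,1⟩,⟨2,0,-1,1⟩,⟨0,0,-1,-1⟩⟩, ⟨4,1,3,1⟩)
def e109 : PR := (⟨⟨2,0,1,1⟩,⟨-1,1,0,0⟩,⟨1,-1,0,0⟩,⟨2,0,-1,-1⟩⟩, ⟨0,2,2,1⟩)
def e110 : PR := (⟨⟨1,1,1,-1⟩,⟨-2,0,0,0⟩,⟨2,0,0,0⟩,⟨1,1,-1,1⟩⟩, ⟨3,2,2,0⟩)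
def e111 : PR := (⟨⟨-1,1,0,0⟩,⟨-2,0,1,1⟩,⟨2,0,1,1⟩,⟨-1,1,0,0⟩⟩, ⟨0,1,4,2⟩)
def e112 : PR := (⟨⟨-2,0,-1,1⟩,⟨0,0,1,1⟩,⟨0,0,1,1⟩,⟨-2,0,1,-1⟩⟩, ⟨2,4,2,2⟩)
def e113 : PR := (⟨⟨-1,1,-2,0⟩,⟨-1,-1,0,0⟩,⟨1,1,0,0⟩,⟨-1,1,2,0⟩⟩, ⟨3,1,1,4⟩)
def e114 : PR := (⟨⟨1,1,-2,0⟩,⟨0,0,-1,1⟩,⟨0,0,-1,1⟩,⟨1,1,2,0⟩⟩, ⟨4,0,2,4⟩)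
def e115 : PR := (⟨⟨-2,0,1,1⟩,⟨-1,1,0,0⟩,⟨1,-1,0,0⟩,⟨-2,0,-1,-1⟩⟩, ⟨4,2,2,0⟩)
def e116 : PR := (⟨⟨1,1,2,0⟩,⟨0,0,-1,1⟩,⟨0,0,-1,1⟩,⟨1,1,-2,0⟩⟩, ⟨4,3,0,4⟩)
def e117 : PR := (⟨⟨0,0,1,-1⟩,⟨1,1,-2,0⟩,⟨-1,-1,-2,0⟩,⟨0,0,-1,1⟩⟩, ⟨3,0,4,2⟩)
def e118 : PR := (⟨⟨-1,1,0,0⟩,⟨2,0,-1,-1⟩,⟨-2,0,-1,-1⟩,⟨-1,1,0,0⟩⟩, ⟨2,4,1,0⟩)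
def e119 : PR := (⟨⟨1,1,0,0⟩,⟨-1,1,2,0⟩,⟨1,-1,2,0⟩,⟨1,1,0,0⟩⟩, ⟨1,2,3,2⟩)
def g0 : PR := (⟨⟨0,0,0,0⟩,⟨0,0,-4,0⟩,⟨0,0,-4,0⟩,⟨0,0,0,0⟩⟩, ⟨0,1,4,0⟩)
def g1 : PR := (⟨⟨0,0,-4,0⟩,⟨0,0,0,0⟩,⟨0,0,0,0⟩,⟨0,0,4,0⟩⟩, ⟨0,2,2,0⟩)
def g2 : PR := (⟨⟨2,0,-2,0⟩,⟨-2,0,-2,0⟩,⟨2,0,-2,0⟩,⟨2,0,2,0⟩⟩, ⟨2,4,3,4⟩)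
def g3 : PR := (⟨⟨1,1,-1,1⟩,⟨2,0,0,0⟩,⟨-2,0,0,0⟩,⟨1,1,1,-1⟩⟩, ⟨0,3,3,3⟩)
def pgens : List PR := [g0, g1, g2, g3]
def elemsP : List PR := [e0, e1, e2, e3, e4, e5, e6, e7, e8, e9, e10, e11, e12, e13, e14, e15, e16, e17, e18, e19, e20, e21, e22, e23, e24, e25, e26, e27, e28, e29, e30, e31, e32, e33, e34, e35, e36, e37, e38, e39, e40, e41, e42, e43, e44, e45, e46, e47, e48, e49, e50, e51, e52, e53, e54, e55, e56, e57, e58, e59, e60, e61, e62, e63, e64, e65, e66, e67, e68, e69, e70, e71, e72, e73, e74, e75, e76, e77, e78, e79, e80, e81, e82, e83, e84, e85, e86, e87, e88, e89, e90, e91, e92, e93, e94, e95, e96, e97, e98, e99, e100, e101, e102, e103, e104, e105, e106, e107, e108, e109, e110, e111, e112, e113, e114, e115, e116, e117, e118, e119]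
def certL : List (Nat × Nat) := [(0,0), (1,0), (2,0), (3,0), (0,1), (1,1), (2,1), (3,1), (0,2), (2,2), (3,2), (1,3), (2,3), (3,3), (0,4), (1,4), (2,4), (3,4), (0,5), (1,5), (2,5), (3,5), (3,6), (1,7), (2,7), (3,7), (0,8), (1,8), (2,8), (3,8), (2,9), (3,9), (2,10), (3,10), (0,11), (1,11), (3,11), (0,12), (2,12), (3,12), (3,13), (0,14), (1,14), (2,14), (3,14), (1,15), (2,15), (0,16), (2,16), (3,16), (1,17), (2,17), (3,17), (0,18), (1,18), (2,18), (3,18), (3,19), (3,20), (2,21), (3,21), (0,22), (1,22), (2,22), (3,22), (0,23), (1,23), (2,24), (3,24), (0,26), (1,26), (2,26), (1,27), (2,27), (0,28), (2,28), (1,29), (2,29), (1,30), (3,30), (2,31), (3,31), (0,32), (1,32), (3,33), (0,34), (1,34), (2,35), (0,36), (1,37), (3,37), (2,38), (3,38), (3,39), (1,40), (2,41), (3,41), (1,42), (0,43), (1,44), (3,45), (3,46), (2,47), (2,48), (0,51), (2,53), (1,54), (0,57), (2,57), (0,58), (0,61), (1,65), (3,65), (1,69), (1,70), (2,74), (2,80),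 (1,86), (2,89)]
def multCert : List (List Nat) := [
  [1,5,9,10,15,19,2,12,27,20,21,35,38,39,42,22,48,49,54,0,6,24,62,66,3,68,70,58,75,76,57,7,83,25,86,59,89,53,31,60,50,90,61,99,36,84,16,51,63,64,82,105,34,29,65,85,26,108,110,100,81,111,4,46,91,80,32,45,92,52,93,97,67,28,77,101,37,41,40,94,18,13,78,23,72,112,69,103,79,102,74,17,33,56,119,116,95,117,43,109,11,73,44,114,47,104,96,55,113,98,8,14,107,30,118,71,106,115,87,88],
  [2,6,5,12,16,20,19,24,28,1,7,36,21,25,43,46,22,51,55,9,0,31,63,67,38,60,71,73,58,77,79,3,84,81,87,44,59,90,10,33,95,76,98,61,100,66,62,91,15,47,96,64,103,41,107,65,97,88,101,102,92,109,48,4,104,112,72,32,39,114,115,93,83,110,53,27,74,37,116,108,85,68,106,45,23,54,118,69,113,35,29,105,13,117,57,82,78,70,111,42,89,8,11,86,17,49,40,80,119,14,75,99,18,94,34,56,50,26,52,30],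
  [3,7,10,13,17,21,12,25,29,31,33,30,39,5,44,47,49,52,56,38,24,60,64,65,68,19,72,74,76,78,42,81,18,20,48,88,57,50,92,9,75,96,59,36,79,55,51,103,104,87,8,34,22,106,71,26,23,109,37,108,0,89,105,91,86,70,85,80,2,46,32,67,112,77,116,90,95,40,58,61,117,6,73,107,54,115,4,63,98,119,82,114,1,45,99,101,27,66,100,35,94,53,113,62,69,118,28,97,111,102,41,11,93,43,16,83,110,84,15,14],
  [4,8,11,14,18,22,23,26,30,32,34,37,40,41,45,1,50,53,57,58,59,61,65,17,69,47,44,5,52,49,80,82,64,85,75,9,70,91,93,94,46,97,10,51,16,101,102,98,36,66,38,68,3,35,15,92,31,27,108,29,74,72,19,78,76,113,2,111,107,73,12,77,28,84,115,67,100,81,7,13,62,88,48,20,42,96,21,79,118,63,39,83,105,89,103,112,43,114,106,95,6,86,56,71,33,99,55,116,54,104,0,24,25,110,119,87,109,90,117,60],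
  [19,0,6,24,62,1,20,31,110,2,3,100,7,81,111,4,46,91,80,5,9,10,15,83,21,33,56,8,73,53,113,38,66,92,52,11,44,76,12,13,78,77,14,98,102,67,63,104,16,17,40,47,69,37,18,107,93,30,27,35,39,42,22,48,49,54,23,72,25,86,26,115,84,101,90,28,29,74,82,88,65,60,50,32,45,55,34,118,119,36,41,64,68,70,79,96,106,71,109,43,59,75,89,87,105,51,116,112,57,99,58,61,85,108,103,117,95,97,114,94],
  [20,9,0,31,63,2,1,10,101,19,38,102,3,92,109,48,4,104,112,6,5,12,16,84,7,13,117,75,8,90,119,21,67,39,114,89,11,77,24,68,106,53,99,14,35,83,15,49,62,105,116,17,118,74,85,18,115,94,28,36,25,43,46,22,51,55,45,23,81,87,97,26,66,27,76,110,41,29,96,30,107,33,95,72,32,80,103,34,57,100,37,47,60,71,113,40,50,56,42,111,44,58,59,52,64,91,82,54,79,61,73,98,65,88,69,70,78,93,86,108],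
  [60,92,68,0,86,13,81,1,50,39,2,111,6,3,119,118,114,4,32,25,33,5,52,56,20,7,55,96,106,8,11,9,70,10,51,99,43,58,19,12,77,110,30,113,14,93,69,15,34,16,37,46,17,101,84,45,18,36,78,42,21,79,103,87,22,23,97,71,24,104,65,54,26,82,27,40,28,73,29,44,67,31,90,115,117,66,64,49,35,61,75,63,38,112,100,76,41,107,88,94,98,95,109,47,48,62,53,83,59,57,116,108,72,102,91,85,74,80,105,89],
  [110,15,66,52,0,27,100,78,1,35,42,2,70,79,3,54,44,23,4,62,83,86,5,6,111,112,7,57,72,59,8,56,9,104,10,53,48,11,50,90,12,13,84,96,26,14,40,25,82,29,16,43,28,17,108,106,102,18,19,20,119,21,80,89,32,22,49,75,51,24,36,103,61,69,60,34,64,71,63,87,30,77,31,91,73,33,101,115,81,93,117,37,55,38,39,99,85,41,47,105,76,45,46,94,109,92,98,68,58,116,113,67,95,65,97,74,107,118,88,114]]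
noncomputable def s5 : ℂ := ((Real.sqrt 5 : ℝ) : ℂ)

lemma hs5 : s5 * s5 = 5 := by
  rw [s5, ← Complex.ofReal_mul, Real.mul_self_sqrt (by norm_num)]; norm_num

noncomputable def psiK (x : KI) : ℂ := (x.a : ℂ) + (x.b : ℂ) * s5 + ((x.c : ℂ) + (x.d : ℂ) * s5) * Complex.I

lemma psiK_add (x y : KI) : psiK (kadd x y) = psiK x + psiK y := by
  simp only [psiK, kadd]; push_cast; ring

lemma psiK_neg (x : KI) : psiK (kneg x) = - psiK x := by
  simp only [psiK, kneg]; push_cast; ring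

lemma psiK_k4 (x : KI) : psiK (k4 x) = 4 * psiK x := by
  simp only [psiK, k4]; push_cast; ring

lemma psiK_KB (x y : KI) : psiK (KB x y) = psiK x * psiK y := by
  simp only [psiK, KB]; push_cast
  linear_combination (-(((x.b : ℂ) + x.d * Complex.I) * ((y.b : ℂ) + y.d * Complex.I))) * hs5 +
    (-((x.c : ℂ) * y.c + ((x.c : ℂ) * y.d + (x.d : ℂ) * y.c) * s5 + 5 * (x.d : ℂ) * y.d)) * Complex.I_mul_I

lemma psiK_conj (x : KI) : psiK (kconj x) = starRingEnd ℂ (psiK x) := by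
  apply Complex.ext <;>
    simp [psiK, kconj, s5] <;> ring

lemma sqrt5_int (a b : ℤ) (h : (a : ℝ) + b * Real.sqrt 5 = 0) : a = 0 ∧ b = 0 := by
  have hirr : Irrational (Real.sqrt 5) := by
    have : Nat.Prime 5 := by norm_num
    simpa using this.irrational_sqrt
  by_cases hb : b = 0
  · subst hb; constructor
    · exact_mod_cast by simpa using h
    · rfl
  · exfalso
    have hbne : (b : ℝ) ≠ 0 := Int.cast_ne_zero.mpr hb
    have : Real.sqrt 5 = ((-a / b : ℚ) : ℝ) := by
      push_cast
      field_simp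
      nlinarith [h]
    exact hirr ⟨(-a/b : ℚ), this.symm⟩

lemma psiK_inj : Function.Injective psiK := by
  intro x y h
  have hre := congrArg Complex.re h
  have him := congrArg Complex.im h
  have hs5im : s5.im = 0 := by simp [s5]
  have hs5re : s5.re = Real.sqrt 5 := by simp [s5]
  simp only [psiK, Complex.add_re, Complex.add_im, Complex.mul_re, Complex.mul_im,
    Complex.intCast_re, Complex.intCast_im, Complex.I_re, Complex.I_im, hs5im, hs5re] at hre him
  ring_nf at hre him
  have h1 : ((x.a - y.a : ℤ) : ℝ) + (x.b - y.b : ℤ) * Real.sqrt 5 = 0 := by push_cast; nlinarith [hre]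
  have h2 : ((x.c - y.c : ℤ) : ℝ) + (x.d - y.d : ℤ) * Real.sqrt 5 = 0 := by push_cast; nlinarith [him]
  obtain ⟨e1, e2⟩ := sqrt5_int _ _ h1
  obtain ⟨e3, e4⟩ := sqrt5_int _ _ h2
  cases x; cases y
  simp_all only [KI.mk.injEq]
  omega
open Matrix in
noncomputable def psiM (m : MI) : Matrix (Fin 2) (Fin 2) ℂ :=
  !![psiK m.p, psiK m.q; psiK m.r, psiK m.s]

open Matrix in
noncomputable def Psi (m : MI) : Matrix (Fin 2) (Fin 2) ℂ := (4 : ℂ)⁻¹ • psiM m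

open Matrix in
lemma psiM_matB (m n : MI) : psiM (matB m n) = psiM m * psiM n := by
  ext i j
  fin_cases i <;> fin_cases j <;>
    simp [psiM, matB, Matrix.mul_apply, Fin.sum_univ_two, psiK_add, psiK_KB]

open Matrix in
lemma psiM_k4M (m : MI) : psiM (k4M m) = (4 : ℂ) • psiM m := by
  ext i j
  fin_cases i <;> fin_cases j <;> simp [psiM, k4M, psiK_k4]

open Matrix in
lemma Psi_rel {m n r : MI} (h : matB m n = k4M r) : Psi m * Psi n = Psi r := by
  have h2 : psiM m * psiM n = (4 : ℂ) • psiM r := by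
    rw [← psiM_matB, h, psiM_k4M]
  simp only [Psi, Matrix.smul_mul, Matrix.mul_smul, h2]
  rw [smul_smul, smul_smul]
  norm_num

open Matrix in
lemma Psi_one : Psi oneI = 1 := by
  ext i j
  fin_cases i <;> fin_cases j <;>
    simp [Psi, psiM, oneI, psiK, Matrix.one_apply] <;> norm_num

open Matrix in
lemma Psi_star (m : MI) : star (Psi m) = Psi (conjT m) := by
  ext i j
  fin_cases i <;> fin_cases j <;>
    simp [Psi, psiM, conjT, Matrix.star_apply, Matrix.smul_apply, psiK_conj, star_smul] <;>
    simp [Complex.ext_iff]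

open Matrix in
lemma Psi_det {m : MI} (h : detB m = ⟨16, 0, 0, 0⟩) : (Psi m).det = 1 := by
  have h1 : (psiM m).det = psiK (detB m) := by
    rw [Matrix.det_fin_two]
    simp [psiM, detB, psiK_add, psiK_neg, psiK_KB]
    ring
  have h2 : psiK (detB m) = 16 := by rw [h]; simp [psiK]
  rw [Psi, Matrix.det_smul]
  rw [h1, h2]
  norm_num

open Matrix in
lemma Psi_inj : Function.Injective Psi := by
  intro m n h
  have h4 : psiM m = psiM n := by
    have := congrArg (fun A => (4 : ℂ) • A) h
    simpa [Psi, smul_smul] using this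
  have e : ∀ i j, psiM m i j = psiM n i j := fun i j => by rw [h4]
  cases m; cases n
  have e00 := e 0 0; have e01 := e 0 1; have e10 := e 1 0; have e11 := e 1 1
  simp only [psiM] at e00 e01 e10 e11
  norm_num at e00 e01 e10 e11
  simp only [MI.mk.injEq]
  exact ⟨psiK_inj e00, psiK_inj e01, psiK_inj e10, psiK_inj e11⟩

open Matrix in
noncomputable def toM (m : M5) : Matrix (Fin 2) (Fin 2) (ZMod 5) := !![m.p, m.q; m.r, m.s]

open Matrix in
lemma toM_mul (m n : M5) : toM (m5mul m n) = toM m * toM n := by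
  ext i j
  fin_cases i <;> fin_cases j <;>
    simp [toM, m5mul, Matrix.mul_apply, Fin.sum_univ_two]

open Matrix in
lemma toM_one : toM one5 = 1 := by
  ext i j
  fin_cases i <;> fin_cases j <;> simp [toM, one5, Matrix.one_apply]

open Matrix in
lemma toM_det (m : M5) : (toM m).det = det5 m := by
  rw [toM, Matrix.det_fin_two_of, det5]

lemma toM_inj : Function.Injective toM := by
  intro m n h
  have e : ∀ i j, toM m i j = toM n i j := fun i j => by rw [h]
  have e00 := e 0 0; have e01 := e 0 1; have e10 := e 1 0; have e11 := e 1 1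
  cases m; cases n
  simp only [toM] at e00 e01 e10 e11
  norm_num at e00 e01 e10 e11
  simp only [M5.mk.injEq]
  exact ⟨e00, e01, e10, e11⟩

lemma m5ext (m n : M5) (h1 : m.p = n.p) (h2 : m.q = n.q) (h3 : m.r = n.r) (h4 : m.s = n.s) : m = n := by
  cases m; cases n; simp_all

lemma m5_one_mul (m : M5) : m5mul one5 m = m := by
  apply m5ext <;> · simp only [m5mul, one5]; ring

open Matrix in
lemma adj_rel {m : MI} (h : detB m = ⟨16, 0, 0, 0⟩) :
    matB m (adjB m) = k4M oneI ∧ matB (adjB m) m = k4M oneI := by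
  obtain ⟨x1, x2, x3, x4⟩ : (detB m).a = 16 ∧ (detB m).b = 0 ∧ (detB m).c = 0 ∧ (detB m).d = 0 := by
    rw [h]; exact ⟨rfl, rfl, rfl, rfl⟩
  simp only [detB, kadd, kneg, KB] at x1 x2 x3 x4
  constructor <;>
  · simp only [matB, adjB, kadd, kneg, KB, k4M, k4, oneI, MI.mk.injEq, KI.mk.injEq]
    refine ⟨⟨?_, ?_, ?_, ?_⟩, ⟨?_, ?_, ?_, ?_⟩, ⟨?_, ?_, ?_, ?_⟩, ⟨?_, ?_, ?_, ?_⟩⟩ <;>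
      linarith [x1, x2, x3, x4]
open Matrix Complex

lemma hgX : Psi g0.1 = Xsf := by
  ext i j
  fin_cases i <;> fin_cases j <;>
    simp [Psi, psiM, psiK, g0, Xsf, PauliX, Complex.ext_iff, s5] <;> norm_num

lemma hgZ : Psi g1.1 = Zsf := by
  ext i j
  fin_cases i <;> fin_cases j <;>
    simp [Psi, psiM, psiK, g1, Zsf, PauliZ, Complex.ext_iff, s5] <;> norm_num

lemma hexp : Complex.exp (-(Real.pi / 4) * I) = ((Real.sqrt 2 / 2 : ℝ) : ℂ) * (1 - I) := by
  have h1 : (-(Real.pi / 4) * I : ℂ) = ((-(Real.pi / 4) : ℝ) : ℂ) * I := by push_cast; ring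
  rw [h1, Complex.exp_mul_I, ← Complex.ofReal_cos, ← Complex.ofReal_sin]
  rw [Real.cos_neg, Real.sin_neg, Real.cos_pi_div_four, Real.sin_pi_div_four]
  push_cast
  ring

lemma hgF : Psi g2.1 = Fsf := by
  have h2 : ((Real.sqrt 2 : ℝ) : ℂ) * ((Real.sqrt 2 : ℝ) : ℂ) = 2 := by
    rw [← Complex.ofReal_mul, Real.mul_self_sqrt (by norm_num)]; norm_num
  have h2ne : ((Real.sqrt 2 : ℝ) : ℂ) ≠ 0 := by
    intro h; rw [h] at h2; norm_num at h2
  have hSd : (Sgate)ᴴ = !![1, 0; 0, -I] := by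
    ext i j
    fin_cases i <;> fin_cases j <;> simp [Sgate, Matrix.conjTranspose_apply, Complex.ext_iff]
  have hHS : Hadamard * !![1, 0; 0, -I] = (1 / ((Real.sqrt 2 : ℝ) : ℂ)) • !![1, -I; 1, I] := by
    ext i j
    fin_cases i <;> fin_cases j <;>
      simp [Hadamard, Matrix.mul_apply, Fin.sum_univ_two, Matrix.smul_apply] <;> ring
  have hAB : (((Real.sqrt 2 / 2 : ℝ) : ℂ) * (1 - I)) * (1 / ((Real.sqrt 2 : ℝ) : ℂ))
      = (1 - I) / 2 := by
    field_simp
    push_cast; ring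
  rw [Fsf, hexp, hSd, hHS, smul_smul, hAB]
  ext i j
  fin_cases i <;> fin_cases j <;>
    simp [Psi, psiM, psiK, g2, Matrix.smul_apply, s5, Complex.ext_iff] <;> norm_num

lemma hginv : goldenφ⁻¹ = (-1 + s5) / 2 := by
  have : goldenφ * ((-1 + s5) / 2) = 1 := by
    rw [goldenφ]
    have : ((1 : ℂ) + (Real.sqrt 5 : ℝ)) = 1 + s5 := by rw [s5]
    rw [this]
    field_simp
    linear_combination hs5
  exact inv_eq_of_mul_eq_one_right this

lemma hgPhi : Psi g3.1 = Phi := by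
  rw [Phi, hginv]
  have hg : goldenφ = (1 + s5) / 2 := by rw [goldenφ, s5]
  rw [hg]
  ext i j
  fin_cases i <;> fin_cases j <;>
    · simp [Psi, psiM, psiK, g3, Matrix.smul_apply]
      push_cast
      ring
def pmults : List PR := pgens ++ pgens.map adjP

set_option maxRecDepth 200000 in
theorem L_nodup_fst : (elemsP.map Prod.fst).Nodup := by decide
set_option maxRecDepth 200000 in
theorem L_nodup_snd : (elemsP.map Prod.snd).Nodup := by decide
theorem L_len : elemsP.length = 120 := by decide
theorem L_one_mem : onePair ∈ elemsP := by decide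
theorem L_head : elemsP.getD 0 onePair = onePair := by decide
set_option maxRecDepth 200000 in
theorem L_cert : ∀ k ∈ List.range 120, k = 0 ∨
    ((certL.getD (k-1) (0,0)).1 < 4 ∧ (certL.getD (k-1) (0,0)).2 < k ∧
      pairRel (pgens.getD (certL.getD (k-1) (0,0)).1 onePair)
        (elemsP.getD (certL.getD (k-1) (0,0)).2 onePair)
        (elemsP.getD k onePair)) := by decide
set_option maxRecDepth 1000000 in
set_option maxHeartbeats 2000000 in
theorem L_mult' : ∀ i ∈ List.range 8, ∀ j ∈ List.range 120,
    (multCert.getD i []).getD j 0 < 120 ∧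
    pairRel (pmults.getD i onePair) (elemsP.getD j onePair)
      (elemsP.getD ((multCert.getD i []).getD j 0) onePair) := by decide
set_option maxRecDepth 200000 in
theorem L_det : ∀ p ∈ elemsP, detB p.1 = ⟨16, 0, 0, 0⟩ ∧ det5 p.2 = 1 := by decide
theorem L_unit : ∀ s ∈ pgens,
    matB (conjT s.1) s.1 = k4M oneI ∧ matB s.1 (conjT s.1) = k4M oneI := by decide
theorem L_gens_mem : ∀ s ∈ pgens, s ∈ elemsP := by decide
set_option maxRecDepth 1000000 in
set_option maxHeartbeats 1000000 in
theorem L_surj5 : ∀ a b c d : ZMod 5, a*d - b*c = 1 →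
    (⟨a,b,c,d⟩ : M5) ∈ elemsP.map Prod.snd := by decide

theorem pmults_len : pmults.length = 8 := by decide

theorem getDmem {k : ℕ} (h : k < 120) : elemsP.getD k onePair ∈ elemsP := by
  rw [List.getD_eq_getElem elemsP onePair (by rw [L_len]; exact h)]
  exact List.getElem_mem _

theorem multStep : ∀ s ∈ pmults, ∀ p ∈ elemsP, ∃ q ∈ elemsP, pairRel s p q := by
  intro s hs p hp
  obtain ⟨i, hi, hsi⟩ := List.mem_iff_getElem.mp hs
  obtain ⟨j, hj, hpj⟩ := List.mem_iff_getElem.mp hp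
  rw [pmults_len] at hi
  rw [L_len] at hj
  have := L_mult' i (List.mem_range.mpr hi) j (List.mem_range.mpr hj)
  refine ⟨elemsP.getD ((multCert.getD i []).getD j 0) onePair, getDmem this.1, ?_⟩
  have h1 : pmults.getD i onePair = s := by
    rw [List.getD_eq_getElem pmults onePair (by rw [pmults_len]; exact hi)]; exact hsi
  have h2 : elemsP.getD j onePair = p := by
    rw [List.getD_eq_getElem elemsP onePair (by rw [L_len]; exact hj)]; exact hpj
  rw [h1, h2] at this
  exact this.2
abbrev UG := Matrix.unitaryGroup (Fin 2) ℂ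
abbrev clos : Subgroup UG := Subgroup.closure icosaGens

lemma unimem : ∀ g ∈ pgens, (Psi g.1) ∈ Matrix.unitaryGroup (Fin 2) ℂ := by
  intro g hg
  obtain ⟨h1, h2⟩ := L_unit g hg
  have hst : star (Psi g.1) = Psi (conjT g.1) := Psi_star g.1
  rw [Unitary.mem_iff]
  exact ⟨by rw [hst, Psi_rel h1, Psi_one], by rw [hst, Psi_rel h2, Psi_one]⟩

lemma pgens_cases : ∀ g ∈ pgens, g = g0 ∨ g = g1 ∨ g = g2 ∨ g = g3 := by
  intro g hg
  simp only [pgens, List.mem_cons, List.not_mem_nil, or_false] at hg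
  tauto

lemma hgPsi : ∀ g ∈ pgens, Psi g.1 = Xsf ∨ Psi g.1 = Zsf ∨ Psi g.1 = Fsf ∨ Psi g.1 = Phi := by
  intro g hg
  rcases pgens_cases g hg with h | h | h | h <;> subst h
  · exact Or.inl hgX
  · exact Or.inr (Or.inl hgZ)
  · exact Or.inr (Or.inr (Or.inl hgF))
  · exact Or.inr (Or.inr (Or.inr hgPhi))

lemma gens_clos : ∀ g ∈ pgens, ∃ u : UG, u ∈ clos ∧ (u : Matrix (Fin 2) (Fin 2) ℂ) = Psi g.1 := by
  intro g hg
  refine ⟨⟨Psi g.1, unimem g hg⟩, ?_, rfl⟩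
  apply Subgroup.subset_closure
  show (Psi g.1) = Xsf ∨ (Psi g.1) = Zsf ∨ (Psi g.1) = Fsf ∨ (Psi g.1) = Phi
  exact hgPsi g hg

lemma Psi_onePair : Psi onePair.1 = 1 := Psi_one

lemma coe1 : ((1 : UG) : Matrix (Fin 2) (Fin 2) ℂ) = 1 := rfl

lemma key1_idx : ∀ k, k < 120 →
    ∃ u : UG, u ∈ clos ∧ (u : Matrix (Fin 2) (Fin 2) ℂ) = Psi ((elemsP.getD k onePair).1) := by
  intro k
  induction k using Nat.strong_induction_on with
  | _ k IH =>
    intro hk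
    rcases L_cert k (List.mem_range.mpr hk) with h0 | ⟨hi4, hjk, hrel⟩
    · subst h0
      rw [L_head]
      exact ⟨1, one_mem _, coe1.trans Psi_onePair.symm⟩
    · set i := (certL.getD (k-1) (0,0)).1 with hidef
      set j := (certL.getD (k-1) (0,0)).2 with hjdef
      have hgi : pgens.getD i onePair ∈ pgens := by
        rw [List.getD_eq_getElem pgens onePair (by simpa [pgens] using hi4)]
        exact List.getElem_mem _
      obtain ⟨ui, hui, hui2⟩ := gens_clos _ hgi
      obtain ⟨uj, huj, huj2⟩ := IH j hjk (lt_trans hjk hk)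
      refine ⟨ui * uj, mul_mem hui huj, ?_⟩
      have : ((ui * uj : UG) : Matrix (Fin 2) (Fin 2) ℂ) = (ui : Matrix (Fin 2) (Fin 2) ℂ) * uj := rfl
      rw [this, hui2, huj2, Psi_rel hrel.1]

lemma key1 : ∀ p ∈ elemsP, ∃ u : UG, u ∈ clos ∧ (u : Matrix (Fin 2) (Fin 2) ℂ) = Psi p.1 := by
  intro p hp
  obtain ⟨k, hk, hpk⟩ := List.mem_iff_getElem.mp hp
  rw [L_len] at hk
  have := key1_idx k hk
  rwa [List.getD_eq_getElem elemsP onePair (by rw [L_len]; exact hk), hpk] at this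

lemma m5_assoc (a b c : M5) : m5mul (m5mul a b) c = m5mul a (m5mul b c) := by
  apply m5ext <;> · simp only [m5mul]; ring

lemma key2_idx : ∀ k, k < 120 → ∀ q ∈ elemsP, ∃ r ∈ elemsP,
    Psi r.1 = Psi ((elemsP.getD k onePair).1) * Psi q.1 ∧
      r.2 = m5mul (elemsP.getD k onePair).2 q.2 := by
  intro k
  induction k using Nat.strong_induction_on with
  | _ k IH =>
    intro hk q hq
    rcases L_cert k (List.mem_range.mpr hk) with h0 | ⟨hi4, hjk, hrel⟩
    · subst h0
      rw [L_head]
      exact ⟨q, hq, by rw [Psi_onePair, one_mul], (m5_one_mul q.2).symm⟩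
    · set i := (certL.getD (k-1) (0,0)).1 with hidef
      set j := (certL.getD (k-1) (0,0)).2 with hjdef
      have hgi : pgens.getD i onePair ∈ pgens := by
        rw [List.getD_eq_getElem pgens onePair (by simpa [pgens] using hi4)]
        exact List.getElem_mem _
      obtain ⟨r', hr', hr'1, hr'2⟩ := IH j hjk (lt_trans hjk hk) q hq
      have hmem : pgens.getD i onePair ∈ pmults := List.mem_append_left _ hgi
      obtain ⟨r, hr, hrrel⟩ := multStep _ hmem r' hr'
      refine ⟨r, hr, ?_, ?_⟩
      · rw [← Psi_rel hrrel.1, hr'1, ← Psi_rel hrel.1, mul_assoc]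
      · rw [← hrrel.2, hr'2, ← m5_assoc, hrel.2]

lemma key2 : ∀ p ∈ elemsP, ∀ q ∈ elemsP, ∃ r ∈ elemsP,
    Psi r.1 = Psi p.1 * Psi q.1 ∧ r.2 = m5mul p.2 q.2 := by
  intro p hp q hq
  obtain ⟨k, hk, hpk⟩ := List.mem_iff_getElem.mp hp
  rw [L_len] at hk
  have := key2_idx k hk q hq
  rwa [List.getD_eq_getElem elemsP onePair (by rw [L_len]; exact hk), hpk] at this

lemma adj_mem_pmults : ∀ g ∈ pgens, adjP g ∈ pmults :=
  fun g hg => List.mem_append_right _ (List.mem_map_of_mem (f := adjP) hg)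

lemma key3 : ∀ u : UG, u ∈ clos → ∃ p ∈ elemsP, Psi p.1 = (u : Matrix (Fin 2) (Fin 2) ℂ) := by
  intro u hu
  have hu' : u ∈ Submonoid.closure (icosaGens ∪ icosaGens⁻¹) := by
    rw [← Subgroup.closure_toSubmonoid]
    exact hu
  obtain ⟨l, hl, hprod⟩ := Submonoid.exists_list_of_mem_closure hu'
  subst hprod
  clear hu hu'
  induction l with
  | nil =>
    exact ⟨onePair, L_one_mem, by rw [List.prod_nil]; exact Psi_onePair.trans coe1.symm⟩
  | cons y l IHl =>
    have hy := hl y List.mem_cons_self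
    obtain ⟨p', hp', hp'1⟩ := IHl (fun z hz => hl z (List.mem_cons_of_mem y hz))
    have hcoe : (((y :: l).prod : UG) : Matrix (Fin 2) (Fin 2) ℂ)
        = (y : Matrix (Fin 2) (Fin 2) ℂ) * (l.prod : UG) := by
      rw [List.prod_cons]; rfl
    rcases hy with hy | hy
    · -- y ∈ icosaGens
      have : ∃ g ∈ pgens, Psi g.1 = (y : Matrix (Fin 2) (Fin 2) ℂ) := by
        rcases hy with h | h | h | h
        · exact ⟨g0, by simp [pgens], by rw [hgX, h]⟩
        · exact ⟨g1, by simp [pgens], by rw [hgZ, h]⟩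
        · exact ⟨g2, by simp [pgens], by rw [hgF, h]⟩
        · exact ⟨g3, by simp [pgens], by rw [hgPhi, h]⟩
      obtain ⟨g, hg, hgy⟩ := this
      obtain ⟨r, hr, hrrel⟩ := multStep g (List.mem_append_left _ hg) p' hp'
      refine ⟨r, hr, ?_⟩
      rw [← Psi_rel hrrel.1, hgy, hp'1, hcoe]
    · -- y⁻¹ ∈ icosaGens
      rw [Set.mem_inv] at hy
      have : ∃ g ∈ pgens, Psi g.1 = ((y⁻¹ : UG) : Matrix (Fin 2) (Fin 2) ℂ) := by
        rcases hy with h | h | h | h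
        · exact ⟨g0, by simp [pgens], by rw [hgX, h]⟩
        · exact ⟨g1, by simp [pgens], by rw [hgZ, h]⟩
        · exact ⟨g2, by simp [pgens], by rw [hgF, h]⟩
        · exact ⟨g3, by simp [pgens], by rw [hgPhi, h]⟩
      obtain ⟨g, hg, hgy⟩ := this
      have hdetg : detB g.1 = ⟨16, 0, 0, 0⟩ := (L_det g (L_gens_mem g hg)).1
      obtain ⟨ha1, ha2⟩ := adj_rel hdetg
      have hright : Psi g.1 * Psi (adjB g.1) = 1 := by rw [Psi_rel ha1, Psi_one]
      have hleft : (y : Matrix (Fin 2) (Fin 2) ℂ) * Psi g.1 = 1 := by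
        rw [hgy]
        have : ((y * y⁻¹ : UG) : Matrix (Fin 2) (Fin 2) ℂ) = 1 := by
          rw [mul_inv_cancel]; rfl
        rw [← this]; rfl
      have hyadj : (y : Matrix (Fin 2) (Fin 2) ℂ) = Psi (adjB g.1) :=
        left_inv_eq_right_inv hleft hright
      obtain ⟨r, hr, hrrel⟩ := multStep (adjP g) (adj_mem_pmults g hg) p' hp'
      refine ⟨r, hr, ?_⟩
      have : Psi (adjP g).1 = Psi (adjB g.1) := rfl
      rw [← Psi_rel hrrel.1, this, ← hyadj, hp'1, hcoe]
lemma closSet : (clos : Set UG) = {u : UG | ∃ p ∈ elemsP, Psi p.1 = (u : Matrix (Fin 2) (Fin 2) ℂ)} := by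
  ext u
  constructor
  · exact key3 u
  · rintro ⟨p, hp, hpu⟩
    obtain ⟨v, hv, hv2⟩ := key1 p hp
    have : v = u := Subtype.ext (by rw [hv2, hpu])
    exact this ▸ hv

lemma uniq {p q : PR} (hp : p ∈ elemsP) (hq : q ∈ elemsP) (h : Psi p.1 = Psi q.1) : p = q :=
  List.inj_on_of_nodup_map L_nodup_fst hp hq (Psi_inj h)

lemma uniq2 {p q : PR} (hp : p ∈ elemsP) (hq : q ∈ elemsP) (h : p.2 = q.2) : p = q :=
  List.inj_on_of_nodup_map L_nodup_snd hp hq h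

lemma hnd : (elemsP.map (fun p => Psi p.1)).Nodup := by
  have h : elemsP.map (fun p => Psi p.1) = (elemsP.map Prod.fst).map Psi := by
    rw [List.map_map]
    rfl
  rw [h]
  exact L_nodup_fst.map Psi_inj

lemma card_clos : Nat.card clos = 120 := by
  have h0 : Nat.card clos = Nat.card ↥(clos : Set UG) := rfl
  rw [h0, Nat.card_coe_set_eq]
  have h1 : ((fun u : UG => (u : Matrix (Fin 2) (Fin 2) ℂ)) '' (clos : Set UG)).ncard
      = (clos : Set UG).ncard :=
    Set.ncard_image_of_injective _ Subtype.coe_injective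
  rw [← h1]
  have h2 : (fun u : UG => (u : Matrix (Fin 2) (Fin 2) ℂ)) '' (clos : Set UG)
      = ↑((elemsP.map (fun p => Psi p.1)).toFinset) := by
    ext A
    simp only [Set.mem_image, Finset.coe_sort_coe, Finset.mem_coe, List.mem_toFinset,
      List.mem_map]
    constructor
    · rintro ⟨u, hu, rfl⟩
      obtain ⟨p, hp, hpu⟩ := key3 u hu
      exact ⟨p, hp, hpu⟩
    · rintro ⟨p, hp, rfl⟩
      obtain ⟨u, hu, hu2⟩ := key1 p hp
      exact ⟨u, hu, hu2⟩
  rw [h2, Set.ncard_coe_finset, List.toFinset_card_of_nodup hnd, List.length_map, L_len]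

abbrev SL5 := Matrix.SpecialLinearGroup (Fin 2) (ZMod 5)

noncomputable def toSL (p : PR) (h : p ∈ elemsP) : SL5 :=
  ⟨toM p.2, by rw [toM_det]; exact (L_det p h).2⟩

noncomputable def pick (u : ↥clos) : PR := Classical.choose (key3 u.1 u.2)

lemma pick_spec (u : ↥clos) :
    pick u ∈ elemsP ∧ Psi (pick u).1 = ((u : UG) : Matrix (Fin 2) (Fin 2) ℂ) :=
  Classical.choose_spec (key3 u.1 u.2)

noncomputable def Fmap (u : ↥clos) : SL5 := toSL (pick u) (pick_spec u).1

lemma Fmap_mul (u v : ↥clos) : Fmap (u * v) = Fmap u * Fmap v := by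
  obtain ⟨hpu, hpu2⟩ := pick_spec u
  obtain ⟨hpv, hpv2⟩ := pick_spec v
  obtain ⟨hpw, hpw2⟩ := pick_spec (u * v)
  obtain ⟨r, hr, hr1, hr2⟩ := key2 (pick u) hpu (pick v) hpv
  have hcoe : (((u * v : ↥clos) : UG) : Matrix (Fin 2) (Fin 2) ℂ)
      = ((u : UG) : Matrix (Fin 2) (Fin 2) ℂ) * ((v : UG) : Matrix (Fin 2) (Fin 2) ℂ) := rfl
  have hPsi : Psi (pick (u * v)).1 = Psi r.1 := by
    rw [hpw2, hcoe, hr1, hpu2, hpv2]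
  have heq : pick (u * v) = r := uniq hpw hr hPsi
  apply Subtype.ext
  show toM (pick (u * v)).2 = (Fmap u * Fmap v : SL5).val
  have : (Fmap u * Fmap v : SL5).val = toM (pick u).2 * toM (pick v).2 := rfl
  rw [this, heq, hr2, toM_mul]

noncomputable def Fhom : ↥clos →* SL5 := MonoidHom.mk' Fmap Fmap_mul

lemma Fhom_inj : Function.Injective Fhom := by
  intro u v h
  have h2 : toM (pick u).2 = toM (pick v).2 := congrArg Subtype.val h
  have h3 : (pick u).2 = (pick v).2 := toM_inj h2
  have h4 : pick u = pick v := uniq2 (pick_spec u).1 (pick_spec v).1 h3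
  have h5 : ((u : UG) : Matrix (Fin 2) (Fin 2) ℂ) = ((v : UG) : Matrix (Fin 2) (Fin 2) ℂ) := by
    rw [← (pick_spec u).2, ← (pick_spec v).2, h4]
  exact Subtype.ext (Subtype.ext h5)

lemma Fhom_surj : Function.Surjective Fhom := by
  intro g
  have hdet : (g : Matrix (Fin 2) (Fin 2) (ZMod 5)).det = 1 := g.2
  rw [Matrix.det_fin_two] at hdet
  have hmem := L_surj5 _ _ _ _ hdet
  obtain ⟨p, hp, hp2⟩ := List.mem_map.mp hmem
  obtain ⟨u, hu, hu2⟩ := key1 p hp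
  refine ⟨⟨u, hu⟩, ?_⟩
  have hq : pick ⟨u, hu⟩ = p := by
    apply uniq (pick_spec ⟨u, hu⟩).1 hp
    rw [(pick_spec ⟨u, hu⟩).2]
    show (u : Matrix (Fin 2) (Fin 2) ℂ) = Psi p.1
    rw [hu2]
  apply Subtype.ext
  show toM (pick ⟨u, hu⟩).2 = (g : Matrix (Fin 2) (Fin 2) (ZMod 5))
  rw [hq, hp2, toM]
  exact (Matrix.eta_fin_two _).symm

/-- 𝖷, 𝖹, 𝖥 and Φ generate a subgroup of SU(2) of order 120,
isomorphic to SL(2,5) (the binary icosahedral group). -/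
theorem binaryIcosahedral_card_and_iso :
    (∀ g ∈ Subgroup.closure icosaGens,
        (g : Matrix (Fin 2) (Fin 2) ℂ) ∈ Matrix.specialUnitaryGroup (Fin 2) ℂ) ∧
    Nat.card (Subgroup.closure icosaGens) = 120 ∧
    Nonempty (↥(Subgroup.closure icosaGens) ≃* Matrix.SpecialLinearGroup (Fin 2) (ZMod 5)) := by
  refine ⟨?_, card_clos, ⟨MulEquiv.ofBijective Fhom ⟨Fhom_inj, Fhom_surj⟩⟩⟩
  intro g hg
  rw [Matrix.mem_specialUnitaryGroup_iff]
  refine ⟨g.2, ?_⟩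
  obtain ⟨p, hp, heq⟩ := key3 g hg
  rw [← heq]
  exact Psi_det (L_det p hp).1

end
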